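/- Scalar curvature of a Hessian metric: at every point of N one has s = (1/4)(|u_{,ijk}|²_g − g^{ij} (g^{mn} u_{,imn})(g^{pq} u_{,jpq})). -/

import Mathlib

open scoped BigOperators
noncomputable section

namespace KRS

variable {n : ℕ}

/-- Partial derivative of `f` in the `i`-th coordinate direction. -/
def pd (i : Fin n) (f : (Fin n → ℝ) → ℝ) : (Fin n → ℝ) → ℝ :=
  fun x => fderiv ℝ f x (Pi.single i 1)

/-- The Hessian matrix `g(x)` of `u`, with entries `g_{ij} = ∂²u/∂x^i∂x^j`. -/
def hessian (u : (Fin n → ℝ) → ℝ) (x : Fin n → ℝ) : Matrix (Fin n) (Fin n) ℝ :=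
  Matrix.of fun i j => pd i (pd j u) x

/-- The inverse matrix `g(x)⁻¹`, with entries `g^{ij}`. -/
def ginv (u : (Fin n → ℝ) → ℝ) (x : Fin n → ℝ) : Matrix (Fin n) (Fin n) ℝ :=
  (hessian u x)⁻¹

/-- Third iterated partial derivative `u_{,ijk}`. -/
def d3 (u : (Fin n → ℝ) → ℝ) (i j k : Fin n) : (Fin n → ℝ) → ℝ :=
  pd i (pd j (pd k u))

/-- Fourth iterated partial derivative `u_{,ijkl}`. -/
def d4 (u : (Fin n → ℝ) → ℝ) (i j k l : Fin n) : (Fin n → ℝ) → ℝ :=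
  pd i (pd j (pd k (pd l u)))

/-- Christoffel symbols `Γ^k_{ij} = (1/2) g^{kl}(∂_i g_{jl} + ∂_j g_{il} − ∂_l g_{ij})`. -/
def Christoffel (u : (Fin n → ℝ) → ℝ) (k i j : Fin n) : (Fin n → ℝ) → ℝ :=
  fun x => (1/2) * ∑ l, ginv u x k l * (d3 u i j l x + d3 u j i l x - d3 u l i j x)

/-- Riemann curvature tensor
`Rm_{ijkl} = g_{is}(∂_k Γ^s_{lj} − ∂_l Γ^s_{kj} + Γ^s_{kp} Γ^p_{lj} − Γ^s_{lp} Γ^p_{kj})`. -/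
def Rm (u : (Fin n → ℝ) → ℝ) (i j k l : Fin n) : (Fin n → ℝ) → ℝ :=
  fun x => ∑ s, hessian u x i s *
    (pd k (Christoffel u s l j) x - pd l (Christoffel u s k j) x
      + ∑ p, Christoffel u s k p x * Christoffel u p l j x
      - ∑ p, Christoffel u s l p x * Christoffel u p k j x)

/-- Ricci tensor `Ric_{ij} = ∂_k Γ^k_{ij} − ∂_j Γ^k_{ik} + Γ^k_{kp} Γ^p_{ij} − Γ^k_{jp} Γ^p_{ik}`. -/
def Ricci (u : (Fin n → ℝ) → ℝ) (i j : Fin n) : (Fin n → ℝ) → ℝ :=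
  fun x => (∑ k, pd k (Christoffel u k i j) x) - (∑ k, pd j (Christoffel u k i k) x)
    + (∑ k, ∑ p, Christoffel u k k p x * Christoffel u p i j x)
    - (∑ k, ∑ p, Christoffel u k j p x * Christoffel u p i k x)

/-- Scalar curvature `s = g^{ij} Ric_{ij}`. -/
def scalarCurv (u : (Fin n → ℝ) → ℝ) : (Fin n → ℝ) → ℝ :=
  fun x => ∑ i, ∑ j, ginv u x i j * Ricci u i j x

/-- Covariant Hessian `(∇²φ)_{ij} = φ_{,ij} − Γ^k_{ij} φ_{,k}`. -/
def covHess (u φ : (Fin n → ℝ) → ℝ) (i j : Fin n) : (Fin n → ℝ) → ℝ :=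
  fun x => pd i (pd j φ) x - ∑ k, Christoffel u k i j x * pd k φ x

/-- Laplace–Beltrami operator `Δφ = g^{ij} (∇²φ)_{ij}`. -/
def laplacian (u φ : (Fin n → ℝ) → ℝ) : (Fin n → ℝ) → ℝ :=
  fun x => ∑ i, ∑ j, ginv u x i j * covHess u φ i j x

/-- Weighted (drift) Laplacian `Δ_φ F = ΔF − g^{ij} φ_{,i} F_{,j}`. -/
def driftLap (u φ F : (Fin n → ℝ) → ℝ) : (Fin n → ℝ) → ℝ :=
  fun x => laplacian u F x - ∑ i, ∑ j, ginv u x i j * pd i φ x * pd j F x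

/-- Bakry–Émery Ricci tensor `(Ric_φ)_{ij} = Ric_{ij} + (∇²φ)_{ij}`. -/
def ricciPhi (u φ : (Fin n → ℝ) → ℝ) (i j : Fin n) : (Fin n → ℝ) → ℝ :=
  fun x => Ricci u i j x + covHess u φ i j x

/-- Pointwise squared `g`-norm of the third derivative tensor:
`|u_{,ijk}|²_g = g^{ip} g^{jq} g^{kr} u_{,ijk} u_{,pqr}`. -/
def norm3 (u : (Fin n → ℝ) → ℝ) : (Fin n → ℝ) → ℝ :=
  fun x => ∑ i, ∑ j, ∑ k, ∑ p, ∑ q, ∑ r,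
    ginv u x i p * ginv u x j q * ginv u x k r * d3 u i j k x * d3 u p q r x

/-- The canonical weight function `φ = (1/2)(u_{,p} ξ^p + v_q x^q)`. -/
def weight (u : (Fin n → ℝ) → ℝ) (ξ v : Fin n → ℝ) : (Fin n → ℝ) → ℝ :=
  fun x => (1/2) * ((∑ p, pd p u x * ξ p) + ∑ q, v q * x q)

/-- `u` solves the weighted Monge–Ampère equation
`log det g(x) = −v_p x^p + u_{,q}(x) ξ^q + c` on `N`. -/
def MAeq (u : (Fin n → ℝ) → ℝ) (N : Set (Fin n → ℝ)) (v ξ : Fin n → ℝ) (c : ℝ) : Prop :=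
  ∀ x ∈ N, Real.log (hessian u x).det = -(∑ p, v p * x p) + (∑ q, pd q u x * ξ q) + c

/-- Covariant derivative of the third derivative tensor:
`(∇T)_{lijk} = u_{,ijkl} − Γ^s_{li} u_{,sjk} − Γ^s_{lj} u_{,isk} − Γ^s_{lk} u_{,ijs}`. -/
def covT (u : (Fin n → ℝ) → ℝ) (l i j k : Fin n) : (Fin n → ℝ) → ℝ :=
  fun x => d4 u i j k l x - (∑ s, Christoffel u s l i x * d3 u s j k x)
    - (∑ s, Christoffel u s l j x * d3 u i s k x)
    - (∑ s, Christoffel u s l k x * d3 u i j s x)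

/-- Completeness of the Hessian metric `g = D²u` on `N`: every C¹ curve
`γ : [0,1) → N` that eventually leaves every compact subset of `N`
has infinite `g`-length. -/
def HessComplete (u : (Fin n → ℝ) → ℝ) (N : Set (Fin n → ℝ)) : Prop :=
  ∀ γ : ℝ → (Fin n → ℝ),
    ContDiffOn ℝ 1 γ (Set.Ico (0:ℝ) 1) →
    (∀ t ∈ Set.Ico (0:ℝ) 1, γ t ∈ N) →
    (∀ K : Set (Fin n → ℝ), IsCompact K → K ⊆ N →
      ∃ tK ∈ Set.Ico (0:ℝ) 1, ∀ t ∈ Set.Ioo tK 1, γ t ∉ K) →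
    ∫⁻ t in Set.Ioo (0:ℝ) 1,
      ENNReal.ofReal (Real.sqrt (∑ i, ∑ j,
        hessian u (γ t) i j * deriv γ t i * deriv γ t j)) = ⊤


variable {N : Set (Fin n → ℝ)} {f g : (Fin n → ℝ) → ℝ} {x : Fin n → ℝ}

lemma pd_congr_nhds (h : f =ᶠ[nhds x] g) (i : Fin n) : pd i f x = pd i g x := by
  unfold pd; rw [h.fderiv_eq]

lemma pd_congr_on (hN : IsOpen N) (h : ∀ y ∈ N, f y = g y) (hx : x ∈ N) (i : Fin n) :
    pd i f x = pd i g x :=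
  pd_congr_nhds (Filter.eventuallyEq_of_mem (hN.mem_nhds hx) h) i

lemma pd_contDiffOn (hN : IsOpen N) (hf : ContDiffOn ℝ (⊤:ℕ∞) f N) (i : Fin n) :
    ContDiffOn ℝ (⊤:ℕ∞) (pd i f) N :=
  (hf.fderiv_of_isOpen hN (by simp)).clm_apply contDiffOn_const

lemma diffAt {F : Type*} [NormedAddCommGroup F] [NormedSpace ℝ F] {f : (Fin n → ℝ) → F}
    (hN : IsOpen N) (hf : ContDiffOn ℝ (⊤:ℕ∞) f N) (hx : x ∈ N) :
    DifferentiableAt ℝ f x :=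
  (hf.contDiffAt (hN.mem_nhds hx)).differentiableAt (by simp)

lemma pd_const (c : ℝ) (i : Fin n) : pd i (fun _ => c) x = 0 := by
  unfold pd; rw [fderiv_fun_const]; simp

lemma pd_add (hf : DifferentiableAt ℝ f x) (hg : DifferentiableAt ℝ g x) (i : Fin n) :
    pd i (fun y => f y + g y) x = pd i f x + pd i g x := by
  unfold pd; rw [fderiv_fun_add hf hg]; simp

lemma pd_sub (hf : DifferentiableAt ℝ f x) (hg : DifferentiableAt ℝ g x) (i : Fin n) :
    pd i (fun y => f y - g y) x = pd i f x - pd i g x := by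
  unfold pd; rw [fderiv_fun_sub hf hg]; simp

lemma pd_mul (hf : DifferentiableAt ℝ f x) (hg : DifferentiableAt ℝ g x) (i : Fin n) :
    pd i (fun y => f y * g y) x = pd i f x * g x + f x * pd i g x := by
  unfold pd; rw [fderiv_fun_mul hf hg]; simp [mul_comm]; ring

lemma pd_const_mul (hf : DifferentiableAt ℝ f x) (c : ℝ) (i : Fin n) :
    pd i (fun y => c * f y) x = c * pd i f x := by
  unfold pd; rw [fderiv_const_mul hf]; simp

lemma pd_sum {ι : Type*} {s : Finset ι} {F : ι → (Fin n → ℝ) → ℝ}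
    (h : ∀ j ∈ s, DifferentiableAt ℝ (F j) x) (i : Fin n) :
    pd i (fun y => ∑ j ∈ s, F j y) x = ∑ j ∈ s, pd i (F j) x := by
  unfold pd; rw [fderiv_fun_sum h]; simp

lemma pd_pd_eq_fderiv2 (hd : DifferentiableAt ℝ (fderiv ℝ f) x) (i j : Fin n) :
    pd i (pd j f) x = fderiv ℝ (fderiv ℝ f) x (Pi.single i 1) (Pi.single j 1) := by
  unfold pd
  rw [show (fun y => (fderiv ℝ f y) (Pi.single j 1))
      = fun y => (fderiv ℝ f y) ((fun _ => (Pi.single j 1 : Fin n → ℝ)) y) from rfl]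
  rw [fderiv_clm_apply hd (differentiableAt_const _)]
  simp

lemma pd_comm (hN : IsOpen N) (hf : ContDiffOn ℝ (⊤:ℕ∞) f N) (i j : Fin n) (hx : x ∈ N) :
    pd i (pd j f) x = pd j (pd i f) x := by
  have hat : ContDiffAt ℝ (⊤:ℕ∞) f x := hf.contDiffAt (hN.mem_nhds hx)
  have hsymm := hat.isSymmSndFDerivAt (by simp [minSmoothness_of_isRCLikeNormedField]; exact (WithTop.coe_le_coe.mpr (le_top : (2:ℕ∞) ≤ ⊤) : ((2:ℕ∞) : WithTop ℕ∞) ≤ _))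
  have h2 : ContDiffOn ℝ (⊤:ℕ∞) (fderiv ℝ f) N := hf.fderiv_of_isOpen hN (by simp)
  have hd : DifferentiableAt ℝ (fderiv ℝ f) x := diffAt hN h2 hx
  rw [pd_pd_eq_fderiv2 hd, pd_pd_eq_fderiv2 hd, hsymm]

variable {u : (Fin n → ℝ) → ℝ}

section SM
variable (hN : IsOpen N) (hu : ContDiffOn ℝ (⊤:ℕ∞) u N)
include hN hu

lemma d3_smooth (i j k : Fin n) : ContDiffOn ℝ (⊤:ℕ∞) (d3 u i j k) N :=
  pd_contDiffOn hN (pd_contDiffOn hN (pd_contDiffOn hN hu k) j) i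

lemma hess_smooth (i j : Fin n) : ContDiffOn ℝ (⊤:ℕ∞) (fun y => hessian u y i j) N :=
  pd_contDiffOn hN (pd_contDiffOn hN hu j) i

-- symmetry of d3 in all arguments, at points of N
lemma d3_symm12 (i j k : Fin n) (hx : x ∈ N) : d3 u i j k x = d3 u j i k x :=
  pd_comm hN (pd_contDiffOn hN hu k) i j hx

lemma d3_symm23 (i j k : Fin n) (hx : x ∈ N) : d3 u i j k x = d3 u i k j x :=
  pd_congr_on hN (fun y hy => pd_comm hN hu j k hy) hx i

lemma d3_symm13 (i j k : Fin n) (hx : x ∈ N) : d3 u i j k x = d3 u k j i x := by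
  rw [d3_symm12 hN hu i j k hx, d3_symm23 hN hu j i k hx, d3_symm12 hN hu j k i hx]

lemma d4_symm13 (i j k l : Fin n) (hx : x ∈ N) : d4 u i j k l x = d4 u k j i l x := by
  have h1 : d4 u i j k l x = pd j (pd i (pd k (pd l u))) x := by
    exact pd_comm hN (pd_contDiffOn hN (pd_contDiffOn hN hu l) k) i j hx
  have h2 : pd j (pd i (pd k (pd l u))) x = pd j (pd k (pd i (pd l u))) x :=
    pd_congr_on hN (fun y hy => pd_comm hN (pd_contDiffOn hN hu l) i k hy) hx j
  have h3 : pd j (pd k (pd i (pd l u))) x = pd k (pd j (pd i (pd l u))) x :=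
    pd_comm hN (pd_contDiffOn hN (pd_contDiffOn hN hu l) i) j k hx
  rw [h1, h2, h3]; rfl

end SM
lemma contDiffOn_det {M : (Fin n → ℝ) → Matrix (Fin n) (Fin n) ℝ}
    (h : ∀ i j, ContDiffOn ℝ (⊤:ℕ∞) (fun y => M y i j) N) :
    ContDiffOn ℝ (⊤:ℕ∞) (fun y => (M y).det) N := by
  have he : (fun y => (M y).det)
      = fun y => ∑ σ : Equiv.Perm (Fin n), (Equiv.Perm.sign σ : ℝ) * ∏ i, M y (σ i) i := by
    funext y; rw [Matrix.det_apply']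
  rw [he]
  exact ContDiffOn.sum fun σ _ =>
    contDiffOn_const.mul (contDiffOn_prod fun i _ => h (σ i) i)

section GM
variable (hN : IsOpen N) (hu : ContDiffOn ℝ (⊤:ℕ∞) u N)
  (hpos : ∀ y ∈ N, (hessian u y).PosDef)
include hN hu hpos

lemma det_ne (hx : x ∈ N) : (hessian u x).det ≠ 0 := (hpos x hx).det_pos.ne'

lemma ginv_smooth (a b : Fin n) : ContDiffOn ℝ (⊤:ℕ∞) (fun y => ginv u y a b) N := by
  have he : (fun y => ginv u y a b)
      = fun y => ((hessian u y).det)⁻¹ * (hessian u y).adjugate a b := by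
    funext y
    rw [ginv, Matrix.inv_def]
    simp [Ring.inverse_eq_inv', Matrix.smul_apply, smul_eq_mul]
  rw [he]
  refine ContDiffOn.mul (ContDiffOn.inv (contDiffOn_det fun i j => hess_smooth hN hu i j)
    (fun y hy => det_ne hN hu hpos hy)) ?_
  have he2 : (fun y => (hessian u y).adjugate a b)
      = fun y => ((hessian u y).updateRow b (Pi.single a 1)).det := by
    funext y; rw [Matrix.adjugate_apply]
  rw [he2]
  refine contDiffOn_det fun i j => ?_
  by_cases hib : i = b
  · simp only [Matrix.updateRow_apply, hib, if_pos rfl]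
    exact contDiffOn_const
  · simp only [Matrix.updateRow_apply, if_neg hib]
    exact hess_smooth hN hu i j

lemma ginv_diffAt (a b : Fin n) (hx : x ∈ N) :
    DifferentiableAt ℝ (fun y => ginv u y a b) x :=
  diffAt hN (ginv_smooth hN hu hpos a b) hx

lemma d3_diffAt (i j k : Fin n) (hx : x ∈ N) : DifferentiableAt ℝ (d3 u i j k) x :=
  diffAt hN (d3_smooth hN hu i j k) hx

lemma ginv_mul_hess (hx : x ∈ N) (a b : Fin n) :
    ∑ c, ginv u x a c * hessian u x c b = if a = b then 1 else 0 := by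
  have h := Matrix.nonsing_inv_mul (hessian u x) (Ne.isUnit (det_ne hN hu hpos hx))
  have := congrArg (fun M => M a b) h
  simpa [Matrix.mul_apply, Matrix.one_apply, ginv] using this

lemma hess_mul_ginv (hx : x ∈ N) (a b : Fin n) :
    ∑ c, hessian u x a c * ginv u x c b = if a = b then 1 else 0 := by
  have h := Matrix.mul_nonsing_inv (hessian u x) (Ne.isUnit (det_ne hN hu hpos hx))
  have := congrArg (fun M => M a b) h
  simpa [Matrix.mul_apply, Matrix.one_apply, ginv] using this

omit hN hu hpos in
lemma pd_hess (m c b : Fin n) : pd m (fun y => hessian u y c b) x = d3 u m c b x := rfl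

lemma pd_ginv (m a b : Fin n) (hx : x ∈ N) :
    pd m (fun y => ginv u y a b) x
      = -∑ p, ∑ q, ginv u x a p * d3 u m p q x * ginv u x q b := by
  -- derivative of the identity ∑ c, ginv a c * hess c b' = δ
  have key : ∀ b' : Fin n,
      ∑ c, (pd m (fun y => ginv u y a c) x * hessian u x c b'
            + ginv u x a c * d3 u m c b' x) = 0 := by
    intro b'
    have h0 : pd m (fun y => ∑ c, ginv u y a c * hessian u y c b') x = 0 := by
      rw [pd_congr_on hN (fun y hy => ginv_mul_hess hN hu hpos hy a b')
        hx m]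
      exact pd_const _ m
    rw [pd_sum (fun c _ => (ginv_diffAt hN hu hpos a c hx).fun_mul
      (diffAt hN (hess_smooth hN hu c b') hx)) m] at h0
    rw [← h0]
    refine Finset.sum_congr rfl fun c _ => ?_
    rw [pd_mul (ginv_diffAt hN hu hpos a c hx) (diffAt hN (hess_smooth hN hu c b') hx) m,
      pd_hess]
  -- contract with ginv on the right
  have expand : pd m (fun y => ginv u y a b) x
      = ∑ c, pd m (fun y => ginv u y a c) x
          * (∑ q, hessian u x c q * ginv u x q b) := by
    rw [Finset.sum_congr rfl (fun c _ => by rw [hess_mul_ginv hN hu hpos hx c b])]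
    simp [mul_ite, Finset.sum_ite_eq']
  rw [expand]
  have swap : ∑ c, pd m (fun y => ginv u y a c) x * (∑ q, hessian u x c q * ginv u x q b)
      = ∑ q, (∑ c, pd m (fun y => ginv u y a c) x * hessian u x c q) * ginv u x q b := by
    simp only [Finset.mul_sum, Finset.sum_mul]
    rw [Finset.sum_comm]
    exact Finset.sum_congr rfl fun q _ => Finset.sum_congr rfl fun c _ => by ring
  rw [swap]
  have repl : ∀ q, ∑ c, pd m (fun y => ginv u y a c) x * hessian u x c q
      = -∑ c, ginv u x a c * d3 u m c q x := by
    intro q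
    have := key q
    rw [Finset.sum_add_distrib] at this
    linarith [this]
  rw [Finset.sum_congr rfl (fun q _ => by rw [repl q])]
  have : ∀ q, (-∑ c, ginv u x a c * d3 u m c q x) * ginv u x q b
      = -∑ c, ginv u x a c * d3 u m c q x * ginv u x q b := by
    intro q; rw [neg_mul, Finset.sum_mul]
  rw [Finset.sum_congr rfl (fun q _ => this q), Finset.sum_neg_distrib, neg_inj]
  exact Finset.sum_comm

end GM
section CH
variable (hN : IsOpen N) (hu : ContDiffOn ℝ (⊤:ℕ∞) u N)
  (hpos : ∀ y ∈ N, (hessian u y).PosDef)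
include hN hu hpos

omit hpos in
lemma christoffel_eq' (k i j : Fin n) (hx : x ∈ N) :
    Christoffel u k i j x = ∑ l, (1/2) * (ginv u x k l * d3 u i j l x) := by
  unfold Christoffel
  rw [Finset.mul_sum]
  refine Finset.sum_congr rfl fun l _ => ?_
  have h1 : d3 u j i l x = d3 u i j l x := d3_symm12 hN hu j i l hx
  have h2 : d3 u l i j x = d3 u i j l x := by
    rw [d3_symm13 hN hu l i j hx]
    exact d3_symm12 hN hu j i l hx
  rw [h1, h2]
  ring

omit hpos in
lemma christoffel_eq (k i j : Fin n) (hx : x ∈ N) :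
    Christoffel u k i j x = (1/2) * ∑ l, ginv u x k l * d3 u i j l x := by
  rw [christoffel_eq' hN hu k i j hx, Finset.mul_sum]

lemma pd_christoffel (m k i j : Fin n) (hx : x ∈ N) :
    pd m (Christoffel u k i j) x = (1/2) * ∑ l,
      ((-∑ p, ∑ q, ginv u x k p * d3 u m p q x * ginv u x q l) * d3 u i j l x
        + ginv u x k l * d4 u m i j l x) := by
  rw [pd_congr_on hN (fun y hy => christoffel_eq' hN hu k i j hy) hx m]
  rw [pd_sum (fun l _ => (((ginv_diffAt hN hu hpos k l hx).fun_mul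
    (d3_diffAt hN hu hpos i j l hx)).const_mul _)) m]
  rw [Finset.mul_sum]
  refine Finset.sum_congr rfl fun l _ => ?_
  rw [pd_const_mul ((ginv_diffAt hN hu hpos k l hx).fun_mul (d3_diffAt hN hu hpos i j l hx)) _ m]
  rw [pd_mul (ginv_diffAt hN hu hpos k l hx) (d3_diffAt hN hu hpos i j l hx) m]
  rw [pd_ginv hN hu hpos m k l hx]
  rfl

end CH
def SS (f : Fin n → Fin n → Fin n → Fin n → Fin n → Fin n → ℝ) : ℝ :=
  ∑ i, ∑ j, ∑ k, ∑ l, ∑ p, ∑ q, f i j k l p q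

lemma SS_flat (f : Fin n → Fin n → Fin n → Fin n → Fin n → Fin n → ℝ) :
    SS f = ∑ v : Fin n × Fin n × Fin n × Fin n × Fin n × Fin n,
      f v.1 v.2.1 v.2.2.1 v.2.2.2.1 v.2.2.2.2.1 v.2.2.2.2.2 := by
  unfold SS; simp only [Fintype.sum_prod_type]

lemma SS_smul (c : ℝ) (f : Fin n → Fin n → Fin n → Fin n → Fin n → Fin n → ℝ) :
    SS (fun a b c' d e g => c * f a b c' d e g) = c * SS f := by
  unfold SS; simp only [← Finset.mul_sum]

lemma SS_congr {f g : Fin n → Fin n → Fin n → Fin n → Fin n → Fin n → ℝ}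
    (h : ∀ a b c d e i, f a b c d e i = g a b c d e i) : SS f = SS g := by
  unfold SS
  exact Finset.sum_congr rfl fun a _ => Finset.sum_congr rfl fun b _ =>
    Finset.sum_congr rfl fun c _ => Finset.sum_congr rfl fun d _ =>
    Finset.sum_congr rfl fun e _ => Finset.sum_congr rfl fun i _ => h a b c d e i

/-- reindexing a 6-fold sum along a bijection of index tuples -/
lemma SS_reindex (f : Fin n → Fin n → Fin n → Fin n → Fin n → Fin n → ℝ)
    (σ : (Fin n × Fin n × Fin n × Fin n × Fin n × Fin n) ≃
         (Fin n × Fin n × Fin n × Fin n × Fin n × Fin n)) :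
    SS (fun a b c d e g =>
      f (σ (a,b,c,d,e,g)).1 (σ (a,b,c,d,e,g)).2.1 (σ (a,b,c,d,e,g)).2.2.1
        (σ (a,b,c,d,e,g)).2.2.2.1 (σ (a,b,c,d,e,g)).2.2.2.2.1 (σ (a,b,c,d,e,g)).2.2.2.2.2)
      = SS f := by
  rw [SS_flat, SS_flat]
  exact Equiv.sum_comp σ fun v => f v.1 v.2.1 v.2.2.1 v.2.2.2.1 v.2.2.2.2.1 v.2.2.2.2.2

def σ1 : (Fin n × Fin n × Fin n × Fin n × Fin n × Fin n) ≃
    (Fin n × Fin n × Fin n × Fin n × Fin n × Fin n) :=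
  ⟨fun v => (v.2.2.2.2.2, v.2.2.2.1, v.1, v.2.1, v.2.2.1, v.2.2.2.2.1),
   fun v => (v.2.2.1, v.2.2.2.1, v.2.2.2.2.1, v.2.1, v.2.2.2.2.2, v.1),
   fun v => rfl, fun v => rfl⟩
def σ2 : (Fin n × Fin n × Fin n × Fin n × Fin n × Fin n) ≃
    (Fin n × Fin n × Fin n × Fin n × Fin n × Fin n) :=
  ⟨fun v => (v.2.1, v.2.2.2.2.1, v.2.2.2.2.2, v.1, v.2.2.1, v.2.2.2.1),
   fun v => (v.2.2.2.1, v.1, v.2.2.2.2.1, v.2.2.2.2.2, v.2.1, v.2.2.1),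
   fun v => rfl, fun v => rfl⟩
def σ3 : (Fin n × Fin n × Fin n × Fin n × Fin n × Fin n) ≃
    (Fin n × Fin n × Fin n × Fin n × Fin n × Fin n) :=
  ⟨fun v => (v.2.2.2.1, v.2.2.2.2.1, v.1, v.2.1, v.2.2.1, v.2.2.2.2.2),
   fun v => (v.2.2.1, v.2.2.2.1, v.2.2.2.2.1, v.1, v.2.1, v.2.2.2.2.2),
   fun v => rfl, fun v => rfl⟩
def σ4 : (Fin n × Fin n × Fin n × Fin n × Fin n × Fin n) ≃
    (Fin n × Fin n × Fin n × Fin n × Fin n × Fin n) :=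
  ⟨fun v => (v.2.1, v.2.2.2.2.2, v.2.2.2.1, v.1, v.2.2.1, v.2.2.2.2.1),
   fun v => (v.2.2.2.1, v.1, v.2.2.2.2.1, v.2.2.1, v.2.2.2.2.2, v.2.1),
   fun v => rfl, fun v => rfl⟩

lemma key (G : Fin n → Fin n → ℝ) (T : Fin n → Fin n → Fin n → ℝ)
    (Q : Fin n → Fin n → Fin n → Fin n → ℝ)
    (hG : ∀ a b, G a b = G b a)
    (hT1 : ∀ a b c, T a b c = T b a c)
    (hT2 : ∀ a b c, T a b c = T a c b)
    (hQ : ∀ a b c d, Q a b c d = Q c b a d) :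
    ∑ i, ∑ j, G i j *
      ((∑ k, (1/2) * ∑ l, ((-∑ p, ∑ q, G k p * T k p q * G q l) * T i j l + G k l * Q k i j l))
       - (∑ k, (1/2) * ∑ l, ((-∑ p, ∑ q, G k p * T j p q * G q l) * T i k l + G k l * Q j i k l))
       + (∑ k, ∑ p, ((1/2) * ∑ l, G k l * T k p l) * ((1/2) * ∑ l, G p l * T i j l))
       - (∑ k, ∑ p, ((1/2) * ∑ l, G k l * T j p l) * ((1/2) * ∑ l, G p l * T i k l)))
    = (1/4) * ((∑ i, ∑ j, ∑ k, ∑ p, ∑ q, ∑ r, G i p * G j q * G k r * T i j k * T p q r)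
        - ∑ i, ∑ j, G i j * (∑ m, ∑ m', G m m' * T i m m') * (∑ p, ∑ q, G p q * T j p q)) := by
  have hT3 : ∀ a b c, T a b c = T c a b := fun a b c => (hT2 a b c).trans (hT1 a c b)
  simp only [Finset.mul_sum, Finset.sum_mul, mul_add, mul_sub, add_mul, sub_mul, neg_mul,
    mul_neg, Finset.sum_neg_distrib, Finset.sum_add_distrib, Finset.sum_sub_distrib]
  have e1 : (∑ a, ∑ b, ∑ c, ∑ d, ∑ e, ∑ g,
        G a b * (1/2 * (G c e * T c e g * G g d * T a b d)))
      = 1/2 * ∑ a, ∑ b, ∑ c, ∑ d, ∑ e, ∑ g,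
        G a b * (G e g * T a e g) * (G c d * T b c d) := by
    calc (∑ a, ∑ b, ∑ c, ∑ d, ∑ e, ∑ g,
          G a b * (1/2 * (G c e * T c e g * G g d * T a b d)))
        = SS (fun a b c d e g =>
            (1/2) * (G g d * (G c e * T g c e) * (G a b * T d a b))) :=
          SS_congr fun a b c d e g => by
            rw [← hT3 c e g, ← hT3 a b d]; ring
      _ = (1/2) * SS (fun a b c d e g => G g d * (G c e * T g c e) * (G a b * T d a b)) :=
          SS_smul _ _
      _ = (1/2) * SS (fun a b c d e g => G a b * (G e g * T a e g) * (G c d * T b c d)) :=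
          congrArg (fun z => (1/2 : ℝ) * z)
            (SS_reindex (fun a b c d e g => G a b * (G e g * T a e g) * (G c d * T b c d)) σ1)
      _ = 1/2 * ∑ a, ∑ b, ∑ c, ∑ d, ∑ e, ∑ g,
            G a b * (G e g * T a e g) * (G c d * T b c d) := rfl
  have e2 : (∑ a, ∑ b, ∑ c, ∑ d, ∑ e, ∑ g,
        G a b * (1/2 * (G c e * T b e g * G g d * T a c d)))
      = 1/2 * ∑ a, ∑ b, ∑ c, ∑ d, ∑ e, ∑ g,
        G a d * G b e * G c g * T a b c * T d e g := by
    calc (∑ a, ∑ b, ∑ c, ∑ d, ∑ e, ∑ g,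
          G a b * (1/2 * (G c e * T b e g * G g d * T a c d)))
        = SS (fun a b c d e g =>
            (1/2) * (G b a * G e c * G g d * T b e g * T a c d)) :=
          SS_congr fun a b c d e g => by
            rw [hG b a, hG e c]; ring
      _ = (1/2) * SS (fun a b c d e g => G b a * G e c * G g d * T b e g * T a c d) :=
          SS_smul _ _
      _ = (1/2) * SS (fun a b c d e g => G a d * G b e * G c g * T a b c * T d e g) :=
          congrArg (fun z => (1/2 : ℝ) * z)
            (SS_reindex (fun a b c d e g => G a d * G b e * G c g * T a b c * T d e g) σ2)
      _ = 1/2 * ∑ a, ∑ b, ∑ c, ∑ d, ∑ e, ∑ g,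
            G a d * G b e * G c g * T a b c * T d e g := rfl
  have e3 : (∑ a, ∑ b, ∑ c, ∑ d, ∑ e, ∑ g,
        G a b * (1/2 * (G c g * T c d g) * (1/2 * (G d e * T a b e))))
      = 1/4 * ∑ a, ∑ b, ∑ c, ∑ d, ∑ e, ∑ g,
        G a b * (G e g * T a e g) * (G c d * T b c d) := by
    calc (∑ a, ∑ b, ∑ c, ∑ d, ∑ e, ∑ g,
          G a b * (1/2 * (G c g * T c d g) * (1/2 * (G d e * T a b e))))
        = SS (fun a b c d e g =>
            (1/4) * (G d e * (G c g * T d c g) * (G a b * T e a b))) :=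
          SS_congr fun a b c d e g => by
            rw [← hT1 c d g, ← hT3 a b e]; ring
      _ = (1/4) * SS (fun a b c d e g => G d e * (G c g * T d c g) * (G a b * T e a b)) :=
          SS_smul _ _
      _ = (1/4) * SS (fun a b c d e g => G a b * (G e g * T a e g) * (G c d * T b c d)) :=
          congrArg (fun z => (1/4 : ℝ) * z)
            (SS_reindex (fun a b c d e g => G a b * (G e g * T a e g) * (G c d * T b c d)) σ3)
      _ = 1/4 * ∑ a, ∑ b, ∑ c, ∑ d, ∑ e, ∑ g,
            G a b * (G e g * T a e g) * (G c d * T b c d) := rfl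
  have e4 : (∑ a, ∑ b, ∑ c, ∑ d, ∑ e, ∑ g,
        G a b * (1/2 * (G c g * T b d g) * (1/2 * (G d e * T a c e))))
      = 1/4 * ∑ a, ∑ b, ∑ c, ∑ d, ∑ e, ∑ g,
        G a d * G b e * G c g * T a b c * T d e g := by
    calc (∑ a, ∑ b, ∑ c, ∑ d, ∑ e, ∑ g,
          G a b * (1/2 * (G c g * T b d g) * (1/2 * (G d e * T a c e))))
        = SS (fun a b c d e g =>
            (1/4) * (G b a * G g c * G d e * T b g d * T a c e)) :=
          SS_congr fun a b c d e g => by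
            rw [hG b a, hG g c, ← hT2 b d g]; ring
      _ = (1/4) * SS (fun a b c d e g => G b a * G g c * G d e * T b g d * T a c e) :=
          SS_smul _ _
      _ = (1/4) * SS (fun a b c d e g => G a d * G b e * G c g * T a b c * T d e g) :=
          congrArg (fun z => (1/4 : ℝ) * z)
            (SS_reindex (fun a b c d e g => G a d * G b e * G c g * T a b c * T d e g) σ4)
      _ = 1/4 * ∑ a, ∑ b, ∑ c, ∑ d, ∑ e, ∑ g,
            G a d * G b e * G c g * T a b c * T d e g := rfl
  have eX : (∑ a, ∑ b, ∑ c, ∑ d, ∑ e, ∑ g,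
        1/4 * (G a d * G b e * G c g * T a b c * T d e g))
      = 1/4 * ∑ a, ∑ b, ∑ c, ∑ d, ∑ e, ∑ g,
        G a d * G b e * G c g * T a b c * T d e g :=
    SS_smul (1/4) (fun a b c d e g => G a d * G b e * G c g * T a b c * T d e g)
  have eY : (∑ a, ∑ b, ∑ c, ∑ d, ∑ e, ∑ g,
        1/4 * (G a b * (G e g * T a e g) * (G c d * T b c d)))
      = 1/4 * ∑ a, ∑ b, ∑ c, ∑ d, ∑ e, ∑ g,
        G a b * (G e g * T a e g) * (G c d * T b c d) :=
    SS_smul (1/4) (fun a b c d e g => G a b * (G e g * T a e g) * (G c d * T b c d))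
  have eQ : (∑ a, ∑ b, ∑ c, ∑ g, G a b * (1/2 * (G c g * Q c a b g)))
      = ∑ a, ∑ b, ∑ c, ∑ g, G a b * (1/2 * (G c g * Q b a c g)) :=
    Finset.sum_congr rfl fun a _ => Finset.sum_congr rfl fun b _ =>
      Finset.sum_congr rfl fun c _ => Finset.sum_congr rfl fun g _ => by
        rw [hQ c a b g]
  rw [e1, e2, e3, e4, eX, eY, eQ]
  ring


section FIN
variable (hN : IsOpen N) (hu : ContDiffOn ℝ (⊤:ℕ∞) u N)
include hN hu

lemma hess_symm (hx : x ∈ N) : (hessian u x).transpose = hessian u x := by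
  ext i j
  show hessian u x j i = hessian u x i j
  exact pd_comm hN hu j i hx

lemma ginv_symm (a b : Fin n) (hx : x ∈ N) : ginv u x a b = ginv u x b a := by
  have h1 : ginv u x a b = ((hessian u x)⁻¹).transpose b a := rfl
  rw [h1, Matrix.transpose_nonsing_inv, hess_symm hN hu hx]
  rfl

end FIN

theorem scalar_of_hessian_metric {n : ℕ} (hn : 1 ≤ n) (N : Set (Fin n → ℝ)) (hNopen : IsOpen N)
    (hNne : N.Nonempty) (u : (Fin n → ℝ) → ℝ) (hu : ContDiffOn ℝ (⊤ : ℕ∞) u N)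
    (hpos : ∀ x ∈ N, (hessian u x).PosDef) :
    ∀ x ∈ N,
      scalarCurv u x = (1/4) * (norm3 u x -
        ∑ i, ∑ j, ginv u x i j * (∑ m, ∑ m', ginv u x m m' * d3 u i m m' x) *
          (∑ p, ∑ q, ginv u x p q * d3 u j p q x)) := by
  intro x hx
  have hu' : ContDiffOn ℝ (⊤:ℕ∞) u N := hu.of_le (by simp)
  have hG : ∀ a b, ginv u x a b = ginv u x b a := fun a b => ginv_symm hNopen hu' a b hx
  have hT1 : ∀ a b c, d3 u a b c x = d3 u b a c x := fun a b c => d3_symm12 hNopen hu' a b c hx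
  have hT2 : ∀ a b c, d3 u a b c x = d3 u a c b x := fun a b c => d3_symm23 hNopen hu' a b c hx
  have hQ : ∀ a b c d, d4 u a b c d x = d4 u c b a d x :=
    fun a b c d => d4_symm13 hNopen hu' a b c d hx
  have hric : ∀ i j, Ricci u i j x =
      (∑ k, (1/2) * ∑ l, ((-∑ p, ∑ q, ginv u x k p * d3 u k p q x * ginv u x q l) * d3 u i j l x
          + ginv u x k l * d4 u k i j l x))
      - (∑ k, (1/2) * ∑ l, ((-∑ p, ∑ q, ginv u x k p * d3 u j p q x * ginv u x q l) * d3 u i k l x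
          + ginv u x k l * d4 u j i k l x))
      + (∑ k, ∑ p, ((1/2) * ∑ l, ginv u x k l * d3 u k p l x)
          * ((1/2) * ∑ l, ginv u x p l * d3 u i j l x))
      - (∑ k, ∑ p, ((1/2) * ∑ l, ginv u x k l * d3 u j p l x)
          * ((1/2) * ∑ l, ginv u x p l * d3 u i k l x)) := by
    intro i j
    have h1 : ∑ k, pd k (Christoffel u k i j) x
        = ∑ k, (1/2) * ∑ l, ((-∑ p, ∑ q, ginv u x k p * d3 u k p q x * ginv u x q l)
            * d3 u i j l x + ginv u x k l * d4 u k i j l x) :=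
      Finset.sum_congr rfl fun k _ => pd_christoffel hNopen hu' hpos k k i j hx
    have h2 : ∑ k, pd j (Christoffel u k i k) x
        = ∑ k, (1/2) * ∑ l, ((-∑ p, ∑ q, ginv u x k p * d3 u j p q x * ginv u x q l)
            * d3 u i k l x + ginv u x k l * d4 u j i k l x) :=
      Finset.sum_congr rfl fun k _ => pd_christoffel hNopen hu' hpos j k i k hx
    have h3 : ∑ k, ∑ p, Christoffel u k k p x * Christoffel u p i j x
        = ∑ k, ∑ p, ((1/2) * ∑ l, ginv u x k l * d3 u k p l x)
            * ((1/2) * ∑ l, ginv u x p l * d3 u i j l x) :=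
      Finset.sum_congr rfl fun k _ => Finset.sum_congr rfl fun p _ => by
        rw [christoffel_eq hNopen hu' k k p hx, christoffel_eq hNopen hu' p i j hx]
    have h4 : ∑ k, ∑ p, Christoffel u k j p x * Christoffel u p i k x
        = ∑ k, ∑ p, ((1/2) * ∑ l, ginv u x k l * d3 u j p l x)
            * ((1/2) * ∑ l, ginv u x p l * d3 u i k l x) :=
      Finset.sum_congr rfl fun k _ => Finset.sum_congr rfl fun p _ => by
        rw [christoffel_eq hNopen hu' k j p hx, christoffel_eq hNopen hu' p i k hx]
    show (∑ k, pd k (Christoffel u k i j) x) - (∑ k, pd j (Christoffel u k i k) x)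
        + (∑ k, ∑ p, Christoffel u k k p x * Christoffel u p i j x)
        - (∑ k, ∑ p, Christoffel u k j p x * Christoffel u p i k x) = _
    rw [h1, h2, h3, h4]
  have hmain := key (fun a b => ginv u x a b) (fun a b c => d3 u a b c x)
    (fun a b c d => d4 u a b c d x) hG hT1 hT2 hQ
  calc scalarCurv u x = ∑ i, ∑ j, ginv u x i j * Ricci u i j x := rfl
    _ = ∑ i, ∑ j, ginv u x i j *
        ((∑ k, (1/2) * ∑ l, ((-∑ p, ∑ q, ginv u x k p * d3 u k p q x * ginv u x q l)
            * d3 u i j l x + ginv u x k l * d4 u k i j l x))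
        - (∑ k, (1/2) * ∑ l, ((-∑ p, ∑ q, ginv u x k p * d3 u j p q x * ginv u x q l)
            * d3 u i k l x + ginv u x k l * d4 u j i k l x))
        + (∑ k, ∑ p, ((1/2) * ∑ l, ginv u x k l * d3 u k p l x)
            * ((1/2) * ∑ l, ginv u x p l * d3 u i j l x))
        - (∑ k, ∑ p, ((1/2) * ∑ l, ginv u x k l * d3 u j p l x)
            * ((1/2) * ∑ l, ginv u x p l * d3 u i k l x))) :=
      Finset.sum_congr rfl fun i _ => Finset.sum_congr rfl fun j _ => by rw [hric i j]
    _ = (1/4) * ((∑ i, ∑ j, ∑ k, ∑ p, ∑ q, ∑ r,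
          ginv u x i p * ginv u x j q * ginv u x k r * d3 u i j k x * d3 u p q r x)
        - ∑ i, ∑ j, ginv u x i j * (∑ m, ∑ m', ginv u x m m' * d3 u i m m' x)
            * (∑ p, ∑ q, ginv u x p q * d3 u j p q x)) := hmain
    _ = (1/4) * (norm3 u x -
        ∑ i, ∑ j, ginv u x i j * (∑ m, ∑ m', ginv u x m m' * d3 u i m m' x) *
          (∑ p, ∑ q, ginv u x p q * d3 u j p q x)) := rfl


end KRS
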